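/- arXiv:2110.05459 — 6 statements merged into one kernel-verified Lean document; each statement's English description precedes it below -/
import Mathlib

section
/- Let k ≥ 4 and suppose v_1, …, v_k ∈ ℤ^r satisfy ⟨v_i, v_i⟩ = 2 for all i, ⟨v_i, v_{i+1}⟩ = −1 for 1 ≤ i ≤ k−1, and ⟨v_i, v_j⟩ = 0 whenever |i − j| ≥ 2. If for every standard basis vector e_m there exists some i with ⟨v_i, e_m⟩ ≠ 0 (local minimality), then r = k + 1. -/
lemma no_sq_two (x : ℤ) : x * x ≠ 2 := by
  intro h
  have h1 : x ≤ 1 := by nlinarith [sq_nonneg (x - 1)]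
  have h2 : -1 ≤ x := by nlinarith [sq_nonneg (x + 1)]
  interval_cases x <;> omega

lemma norm_two_struct {r : ℕ} (w : Fin r → ℤ) (h : ∑ m, w m * w m = 2) :
    (Finset.univ.filter (fun m => w m ≠ 0)).card = 2 ∧
      ∀ m, w m ≠ 0 → w m = 1 ∨ w m = -1 := by
  classical
  set S := Finset.univ.filter (fun m => w m ≠ 0) with hS
  have hsum : ∑ m ∈ S, w m * w m = 2 := by
    rw [← h]
    exact Finset.sum_subset (Finset.subset_univ S) (by
      intro x _ hx
      have : w x = 0 := by simpa [hS] using hx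
      simp [this])
  have hterm : ∀ m ∈ S, 1 ≤ w m * w m := by
    intro m hm
    have hne : w m ≠ 0 := (Finset.mem_filter.mp hm).2
    have := mul_self_pos.mpr hne
    omega
  have hle : ∀ m ∈ S, w m * w m ≤ 2 := by
    intro m hm
    calc w m * w m ≤ ∑ x ∈ S, w x * w x :=
          Finset.single_le_sum (fun i _ => mul_self_nonneg (w i)) hm
      _ = 2 := hsum
  have hone : ∀ m ∈ S, w m * w m = 1 := by
    intro m hm
    have h1 := hterm m hm
    have h2 := hle m hm
    have h3 := no_sq_two (w m)
    omega
  have hcard : S.card = 2 := by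
    have hge : (S.card : ℤ) ≤ 2 := by
      calc (S.card : ℤ) = ∑ _m ∈ S, (1 : ℤ) := by simp
        _ ≤ ∑ m ∈ S, w m * w m := Finset.sum_le_sum hterm
        _ = 2 := hsum
    have hcle : S.card ≤ 2 := by exact_mod_cast hge
    interval_cases h' : S.card
    · exfalso; rw [Finset.card_eq_zero] at h'; simp [h'] at hsum
    · exfalso
      rw [Finset.card_eq_one] at h'
      obtain ⟨a, ha⟩ := h'
      rw [ha, Finset.sum_singleton] at hsum
      exact no_sq_two _ hsum
    · rfl
  refine ⟨hcard, fun m hm => ?_⟩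
  have : m ∈ S := by simp [hS, hm]
  exact mul_self_eq_one_iff.mp (hone m this)

lemma dot_eq_sum_inter {r : ℕ} (w u : Fin r → ℤ) :
    ∑ m, w m * u m =
      ∑ m ∈ ((Finset.univ.filter fun m => w m ≠ 0) ∩ (Finset.univ.filter fun m => u m ≠ 0)),
        w m * u m := by
  symm
  apply Finset.sum_subset (Finset.subset_univ _)
  intro x _ hx
  simp only [Finset.mem_inter, Finset.mem_filter, Finset.mem_univ, true_and, not_and] at hx
  by_cases h : w x = 0
  · simp [h]
  · simp [not_not.mp (hx h)]

lemma sum_inter_cases {r : ℕ} (w u : Fin r → ℤ)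
    (hw : ∀ m, w m ≠ 0 → w m = 1 ∨ w m = -1)
    (hu : ∀ m, u m ≠ 0 → u m = 1 ∨ u m = -1)
    (T : Finset (Fin r)) (hT : ∀ m ∈ T, w m ≠ 0 ∧ u m ≠ 0) :
    (T.card = 0 → ∑ m ∈ T, w m * u m = 0) ∧
    (T.card = 1 → ∑ m ∈ T, w m * u m = 1 ∨ ∑ m ∈ T, w m * u m = -1) ∧
    (T.card = 2 → ∑ m ∈ T, w m * u m = -2 ∨ ∑ m ∈ T, w m * u m = 0 ∨
      ∑ m ∈ T, w m * u m = 2) := by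
  refine ⟨?_, ?_, ?_⟩
  · intro h
    rw [Finset.card_eq_zero] at h
    simp [h]
  · intro h
    rw [Finset.card_eq_one] at h
    obtain ⟨a, ha⟩ := h
    have hma : a ∈ T := by simp [ha]
    obtain ⟨hwa, hua⟩ := hT a hma
    rw [ha, Finset.sum_singleton]
    rcases hw a hwa with h1 | h1 <;> rcases hu a hua with h2 | h2 <;>
      rw [h1, h2] <;> norm_num
  · intro h
    rw [Finset.card_eq_two] at h
    obtain ⟨a, b, hab, hT2⟩ := h
    have hma : a ∈ T := by simp [hT2]
    have hmb : b ∈ T := by simp [hT2]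
    obtain ⟨hwa, hua⟩ := hT a hma
    obtain ⟨hwb, hub⟩ := hT b hmb
    rw [hT2, Finset.sum_pair hab]
    rcases hw a hwa with h1 | h1 <;> rcases hu a hua with h2 | h2 <;>
      rcases hw b hwb with h3 | h3 <;> rcases hu b hub with h4 | h4 <;>
      rw [h1, h2, h3, h4] <;> norm_num

theorem minus_two_chain_rank (k r : ℕ) (hk : 4 ≤ k) (v : Fin k → Fin r → ℤ)
    (hnorm : ∀ i, ∑ m, v i m * v i m = 2)
    (hadj : ∀ i j : Fin k, (i : ℕ) + 1 = (j : ℕ) → ∑ m, v i m * v j m = -1)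
    (hfar : ∀ i j : Fin k, 2 ≤ ((i : ℤ) - (j : ℤ)).natAbs → ∑ m, v i m * v j m = 0)
    (hmin : ∀ m : Fin r, ∃ i, v i m ≠ 0) :
    r = k + 1 := by
  classical
  set S : Fin k → Finset (Fin r) := fun i => Finset.univ.filter fun m => v i m ≠ 0 with hSdef
  have hval : ∀ i m, v i m ≠ 0 → v i m = 1 ∨ v i m = -1 :=
    fun i => (norm_two_struct (v i) (hnorm i)).2
  have hcard2 : ∀ i, (S i).card = 2 := fun i => (norm_two_struct (v i) (hnorm i)).1
  have hdot : ∀ i j, ∑ m, v i m * v j m = ∑ m ∈ S i ∩ S j, v i m * v j m :=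
    fun i j => dot_eq_sum_inter (v i) (v j)
  have hmem : ∀ i j, ∀ m ∈ S i ∩ S j, v i m ≠ 0 ∧ v j m ≠ 0 := by
    intro i j m hm
    simp only [hSdef, Finset.mem_inter, Finset.mem_filter, Finset.mem_univ, true_and] at hm
    exact hm
  have hcases := fun i j => sum_inter_cases (v i) (v j) (hval i) (hval j) (S i ∩ S j) (hmem i j)
  have hTle : ∀ i j, (S i ∩ S j).card ≤ 2 := fun i j =>
    le_trans (Finset.card_le_card Finset.inter_subset_left) (le_of_eq (hcard2 i))
  have hadjcard : ∀ i j : Fin k, (i : ℕ) + 1 = (j : ℕ) → (S i ∩ S j).card = 1 := by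
    intro i j hij
    obtain ⟨h0, h1, h2⟩ := hcases i j
    have hd : ∑ m ∈ S i ∩ S j, v i m * v j m = -1 := by rw [← hdot]; exact hadj i j hij
    have hle := hTle i j
    have hc : (S i ∩ S j).card = 0 ∨ (S i ∩ S j).card = 1 ∨ (S i ∩ S j).card = 2 := by omega
    rcases hc with hc | hc | hc
    · exfalso; have := h0 hc; omega
    · exact hc
    · exfalso; rcases h2 hc with h | h | h <;> omega
  have hfarS : ∀ i j : Fin k, 2 ≤ ((i : ℤ) - (j : ℤ)).natAbs →
      (S i ∩ S j).card = 0 ∨ S i = S j := by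
    intro i j hij
    obtain ⟨h0, h1, h2⟩ := hcases i j
    have hd : ∑ m ∈ S i ∩ S j, v i m * v j m = 0 := by rw [← hdot]; exact hfar i j hij
    have hle := hTle i j
    have hc : (S i ∩ S j).card = 0 ∨ (S i ∩ S j).card = 1 ∨ (S i ∩ S j).card = 2 := by omega
    rcases hc with hc | hc | hc
    · exact Or.inl hc
    · exfalso; rcases h1 hc with h | h <;> omega
    · right
      have e1 : S i ∩ S j = S i :=
        Finset.eq_of_subset_of_card_le Finset.inter_subset_left (by rw [hcard2 i, hc])
      have e2 : S i ∩ S j = S j :=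
        Finset.eq_of_subset_of_card_le Finset.inter_subset_right (by rw [hcard2 j, hc])
      rw [← e1, e2]
  -- contradiction helper: t adjacent to x, far from y, S x = S y
  have contra : ∀ t x y : Fin k, (S t ∩ S x).card = 1 →
      2 ≤ ((t : ℤ) - (y : ℤ)).natAbs → S x = S y → False := by
    intro t x y h1 h2 hxy
    rcases hfarS t y h2 with h0 | hty
    · rw [Finset.card_eq_zero] at h0
      rw [hxy, h0] at h1
      simp at h1
    · rw [hty, ← hxy, Finset.inter_self, hcard2] at h1
      omega
  have key : ∀ a b : Fin k, (a : ℕ) + 2 ≤ (b : ℕ) → S a ≠ S b := by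
    intro a b hab hEq
    have hbk := b.isLt
    by_cases hb1 : (b : ℕ) + 1 < k
    · -- t = b + 1
      set t : Fin k := ⟨(b : ℕ) + 1, hb1⟩ with ht
      have hadj1 : (S t ∩ S b).card = 1 := by
        rw [Finset.inter_comm]; exact hadjcard b t rfl
      exact contra t b a hadj1 (by simp [ht]; omega) hEq.symm
    · by_cases ha0 : 0 < (a : ℕ)
      · -- t = a - 1
        set t : Fin k := ⟨(a : ℕ) - 1, by omega⟩ with ht
        have hadj1 : (S t ∩ S a).card = 1 := hadjcard t a (by simp [ht]; omega)
        exact contra t a b hadj1 (by simp [ht]; omega) hEq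
      · -- a = 0, b = k-1, t = 1
        set t : Fin k := ⟨1, by omega⟩ with ht
        have hadj1 : (S t ∩ S a).card = 1 := by
          rw [Finset.inter_comm]; exact hadjcard a t (by simp [ht]; omega)
        exact contra t a b hadj1 (by simp [ht]; omega) hEq
  have hfarNe : ∀ a b : Fin k, (a : ℕ) + 2 ≤ (b : ℕ) → S a ∩ S b = ∅ := by
    intro a b hab
    rcases hfarS a b (by omega) with h | h
    · exact Finset.card_eq_zero.mp h
    · exact absurd h (key a b hab)
  -- counting
  set Sn : ℕ → Finset (Fin r) := fun n => if h : n < k then S ⟨n, h⟩ else ∅ with hSn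
  have hSn_eq : ∀ n (h : n < k), Sn n = S ⟨n, h⟩ := by
    intro n h; simp [hSn, h]
  have hUcard : ∀ n, n < k → ((Finset.range (n + 1)).biUnion Sn).card = n + 2 := by
    intro n
    induction n with
    | zero =>
      intro h
      rw [Finset.range_one, Finset.singleton_biUnion, hSn_eq 0 h]
      exact hcard2 _
    | succ n ih =>
      intro h
      have hn : n < k := by omega
      have IH := ih hn
      rw [Finset.range_add_one, Finset.biUnion_insert]
      have hint : Sn (n + 1) ∩ (Finset.range (n + 1)).biUnion Sn = Sn (n + 1) ∩ Sn n := by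
        ext x
        simp only [Finset.mem_inter, Finset.mem_biUnion, Finset.mem_range]
        constructor
        · rintro ⟨hx1, i, hi, hx2⟩
          refine ⟨hx1, ?_⟩
          rcases Nat.lt_or_ge i n with hlt | hge
          · exfalso
            have hemp : S ⟨i, by omega⟩ ∩ S ⟨n + 1, h⟩ = ∅ := hfarNe _ _ (by simp; omega)
            have hx2' : x ∈ S ⟨i, by omega⟩ := by rw [← hSn_eq i (by omega)]; exact hx2
            have hx1' : x ∈ S ⟨n + 1, h⟩ := by rw [← hSn_eq (n + 1) h]; exact hx1
            have : x ∈ S ⟨i, by omega⟩ ∩ S ⟨n + 1, h⟩ := Finset.mem_inter.mpr ⟨hx2', hx1'⟩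
            rw [hemp] at this
            exact absurd this (Finset.notMem_empty x)
          · have : i = n := by omega
            subst this
            exact hx2
        · rintro ⟨hx1, hx2⟩
          exact ⟨hx1, n, by omega, hx2⟩
      have hcap : (Sn (n + 1) ∩ Sn n).card = 1 := by
        rw [hSn_eq (n + 1) h, hSn_eq n hn, Finset.inter_comm]
        exact hadjcard ⟨n, hn⟩ ⟨n + 1, h⟩ rfl
      have hcu := Finset.card_union_add_card_inter (Sn (n + 1)) ((Finset.range (n + 1)).biUnion Sn)
      rw [hint, hcap, IH] at hcu
      have hc2 : (Sn (n + 1)).card = 2 := by rw [hSn_eq (n + 1) h]; exact hcard2 _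
      omega
  have huniv : (Finset.range k).biUnion Sn = Finset.univ := by
    apply Finset.eq_univ_iff_forall.mpr
    intro x
    obtain ⟨i, hi⟩ := hmin x
    refine Finset.mem_biUnion.mpr ⟨(i : ℕ), Finset.mem_range.mpr i.isLt, ?_⟩
    rw [hSn_eq _ i.isLt]
    simp only [hSdef, Finset.mem_filter, Finset.mem_univ, true_and]
    simpa using hi
  have hfinal := hUcard (k - 1) (by omega)
  rw [show k - 1 + 1 = k by omega, huniv] at hfinal
  rw [Finset.card_univ, Fintype.card_fin] at hfinal
  omega
end

section
/- Let p and α be coprime integers with 1 < p < α. Let u be the unique integer with 0 < u < α and (α − p)·u ≡ 1 (mod α), and let w be the unique integer with 0 < w < p and (p·⌈α/p⌉ − α)·w ≡ 1 (mod p). Then 1/(pα) + u/α + w/p = 1. -/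
theorem corner_weight_identity (p α : ℤ) (hp : 1 < p) (hpα : p < α)
    (hcop : IsCoprime p α)
    (u : ℤ) (hu1 : 0 < u) (hu2 : u < α) (hu : α ∣ (α - p) * u - 1)
    (w : ℤ) (hw1 : 0 < w) (hw2 : w < p)
    (hw : p ∣ (p * ⌈(α : ℚ) / (p : ℚ)⌉ - α) * w - 1) :
    (1 : ℚ) / ((p : ℚ) * α) + (u : ℚ) / α + (w : ℚ) / p = 1 := by
  have hp0 : (0:ℤ) < p := by linarith
  have hα0 : (0:ℤ) < α := by linarith
  set c : ℤ := ⌈(α : ℚ) / (p : ℚ)⌉ with hc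
  -- α ∣ u*p + 1
  have h1 : α ∣ u * p + 1 := by
    have h := dvd_sub (⟨u, rfl⟩ : α ∣ α * u) hu
    have : α * u - ((α - p) * u - 1) = u * p + 1 := by ring
    rwa [this] at h
  -- p ∣ w*α + 1
  have h2 : p ∣ w * α + 1 := by
    have h := dvd_sub (⟨c * w, rfl⟩ : p ∣ p * (c * w)) hw
    have : p * (c * w) - ((p * c - α) * w - 1) = w * α + 1 := by ring
    rwa [this] at h
  have hdvdp : p ∣ 1 + u * p + w * α := by
    have : 1 + u * p + w * α = (w * α + 1) + p * u := by ring
    rw [this]; exact dvd_add h2 ⟨u, rfl⟩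
  have hdvdα : α ∣ 1 + u * p + w * α := by
    have : 1 + u * p + w * α = (u * p + 1) + α * w := by ring
    rw [this]; exact dvd_add h1 ⟨w, rfl⟩
  have hdvd : p * α ∣ 1 + u * p + w * α := hcop.mul_dvd hdvdp hdvdα
  obtain ⟨k, hk⟩ := hdvd
  have hpα0 : (0:ℤ) < p * α := mul_pos hp0 hα0
  have hk1 : 1 ≤ k := by nlinarith
  have hk2 : k ≤ 1 := by nlinarith
  have hk' : k = 1 := le_antisymm hk2 hk1
  have key : 1 + u * p + w * α = p * α := by rw [hk, hk']; ring
  have keyQ : (1:ℚ) + (u:ℚ) * p + (w:ℚ) * α = (p:ℚ) * α := by exact_mod_cast key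
  have hpQ : (p:ℚ) ≠ 0 := by positivity
  have hαQ : (α:ℚ) ≠ 0 := by
    have : (0:ℚ) < (α:ℚ) := by exact_mod_cast hα0
    positivity
  field_simp
  linear_combination keyQ
end

section
/- Let p, α be coprime integers with 1 < p < α, let d = ⌈α/p⌉, and suppose d ≥ 3. Write α/(α − p) = [c_1, c_2, …, c_s]⁻ as its unique negative continued fraction expansion with all c_i ≥ 2. Then c_1 = c_2 = ⋯ = c_{d−2} = 2, and moreover not all c_i equal 2. -/
/-- Negative continued fraction `[a_1, …, a_s]⁻ = a_1 - 1/(a_2 - 1/(⋯ - 1/a_s))`. -/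
def ncf : List ℚ → ℚ
  | [] => 0
  | a :: l => a - (ncf l)⁻¹

lemma ncf_nil : ncf [] = 0 := rfl

lemma ncf_cons (a : ℚ) (l : List ℚ) : ncf (a :: l) = a - (ncf l)⁻¹ := rfl

lemma ncf_gt_one : ∀ L : List ℤ, (∀ x ∈ L, (2:ℤ) ≤ x) → L ≠ [] →
    1 < ncf (L.map (fun x : ℤ => (x:ℚ)))
  | [], _, h => absurd rfl h
  | a :: l, hL, _ => by
    have ha : (2:ℚ) ≤ (a:ℚ) := by exact_mod_cast hL a List.mem_cons_self
    rw [List.map_cons, ncf_cons]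
    rcases eq_or_ne l [] with rfl | hl
    · rw [List.map_nil, ncf_nil, inv_zero]; linarith
    · have ih := ncf_gt_one l (fun x hx => hL x (List.mem_cons_of_mem _ hx)) hl
      have h0 : 0 < ncf (l.map (fun x : ℤ => (x:ℚ))) := lt_trans one_pos ih
      have h1 : (ncf (l.map (fun x : ℤ => (x:ℚ))))⁻¹ < 1 := by
        rw [inv_eq_one_div, div_lt_one h0]; exact ih
      linarith

lemma ncf_inv_bounds (L : List ℤ) (hL : ∀ x ∈ L, (2:ℤ) ≤ x) :
    0 ≤ (ncf (L.map (fun x : ℤ => (x:ℚ))))⁻¹ ∧ (ncf (L.map (fun x : ℤ => (x:ℚ))))⁻¹ < 1 := by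
  rcases eq_or_ne L [] with rfl | hl
  · rw [List.map_nil, ncf_nil, inv_zero]; norm_num
  · have h := ncf_gt_one L hL hl
    have h0 : 0 < ncf (L.map (fun x : ℤ => (x:ℚ))) := lt_trans one_pos h
    constructor
    · exact le_of_lt (inv_pos.mpr h0)
    · rw [inv_eq_one_div, div_lt_one h0]; exact h

lemma ncf_replicate (n : ℕ) :
    ncf (List.replicate n (2:ℚ)) = ((n:ℚ)+1)/(n:ℚ) := by
  induction n with
  | zero => simp [ncf_nil]
  | succ n ih =>
    rw [List.replicate_succ, ncf_cons, ih, inv_div]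
    have hn : ((n:ℚ)+1) ≠ 0 := by positivity
    push_cast
    field_simp
    ring

lemma key : ∀ (k : ℕ) (α p : ℤ) (L : List ℤ), 1 < p → p < α →
    ((k:ℤ) + 2 ≤ ⌈(α:ℚ)/(p:ℚ)⌉) → (∀ x ∈ L, (2:ℤ) ≤ x) →
    ncf (L.map (fun x : ℤ => (x:ℚ))) = (α:ℚ)/((α:ℚ) - p) →
    L.take k = List.replicate k 2 := by
  intro k
  induction k with
  | zero => intro α p L _ _ _ _ _; simp
  | succ k ih =>
    intro α p L hp hpα hceil hL hncf
    have hp0 : (0:ℚ) < (p:ℚ) := by exact_mod_cast lt_trans one_pos hp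
    have hap : (0:ℚ) < (α:ℚ) - p := by
      have : (p:ℚ) < α := by exact_mod_cast hpα
      linarith
    have hdivgt : ((k:ℚ) + 2) < (α:ℚ)/p := by
      by_contra h
      push_neg at h
      have : ⌈(α:ℚ)/(p:ℚ)⌉ ≤ (k:ℤ) + 2 := by
        apply Int.ceil_le.mpr
        push_cast
        exact h
      omega
    have h2p : 2 * (p:ℚ) < (α:ℚ) := by
      have h2 : (2:ℚ) < (α:ℚ)/p := by
        have : (0:ℚ) ≤ (k:ℚ) := Nat.cast_nonneg k
        linarith
      calc 2 * (p:ℚ) < ((α:ℚ)/p) * p := mul_lt_mul_of_pos_right h2 hp0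
        _ = α := div_mul_cancel₀ _ (ne_of_gt hp0)
    set t : ℚ := (α:ℚ)/((α:ℚ) - p) with ht
    have ht1 : 1 < t := by
      rw [ht, lt_div_iff₀ hap]
      have : (p:ℚ) < α := by exact_mod_cast hpα
      linarith
    have ht2 : t < 2 := by
      rw [ht, div_lt_iff₀ hap]
      linarith
    rcases L with _ | ⟨c, l⟩
    · exfalso
      rw [List.map_nil, ncf_nil] at hncf
      linarith [hncf ▸ ht1]
    have hl2 : ∀ x ∈ l, (2:ℤ) ≤ x := fun x hx => hL x (List.mem_cons_of_mem _ hx)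
    have hc2 : (2:ℤ) ≤ c := hL c List.mem_cons_self
    obtain ⟨hinv0, hinv1⟩ := ncf_inv_bounds l hl2
    have hcons : (c:ℚ) - (ncf (l.map (fun x : ℤ => (x:ℚ))))⁻¹ = t := by
      rw [List.map_cons, ncf_cons] at hncf
      exact hncf
    have hcQ : (c:ℚ) = 2 := by
      have hcle : (c:ℚ) ≤ 2 := by
        by_contra hcon
        push_neg at hcon
        have h3 : (3:ℤ) ≤ c := by exact_mod_cast (by exact_mod_cast hcon : (2:ℤ) < c)
        have : (3:ℚ) ≤ (c:ℚ) := by exact_mod_cast h3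
        linarith
      have : (2:ℚ) ≤ (c:ℚ) := by exact_mod_cast hc2
      linarith
    have hc : c = 2 := by exact_mod_cast hcQ
    have hinv : (ncf (l.map (fun x : ℤ => (x:ℚ))))⁻¹ = ((α:ℚ) - 2*p)/((α:ℚ) - p) := by
      have h2 : (ncf (l.map (fun x : ℤ => (x:ℚ))))⁻¹ = 2 - t := by
        rw [← hcons, hcQ]; ring
      rw [h2, ht]
      rw [eq_div_iff (ne_of_gt hap)]
      field_simp
      ring
    have hy : ncf (l.map (fun x : ℤ => (x:ℚ))) = ((α:ℚ) - p)/((α:ℚ) - 2*p) := by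
      have := congrArg (·⁻¹) hinv
      simp only [inv_inv, inv_div] at this
      exact this
    have h2pZ : 2 * p < α := by exact_mod_cast h2p
    have hceil' : (k:ℤ) + 2 ≤ ⌈((α - p : ℤ):ℚ)/(p:ℚ)⌉ := by
      have heq : ((α - p : ℤ):ℚ)/(p:ℚ) = (α:ℚ)/p - 1 := by
        push_cast
        field_simp
      rw [heq, Int.ceil_sub_one]
      push_cast at hceil
      omega
    have hy' : ncf (l.map (fun x : ℤ => (x:ℚ))) = ((α - p : ℤ):ℚ)/(((α - p : ℤ):ℚ) - p) := by
      rw [hy]; push_cast; ring_nf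
    have htail := ih (α - p) p l hp (by omega) hceil' hl2 hy'
    rw [hc, List.take_succ_cons, htail, List.replicate_succ]

lemma exists_ne_two (α p : ℤ) (L : List ℤ) (hp : 1 < p) (hpα : p < α)
    (hcop : IsCoprime p α)
    (hncf : ncf (L.map (fun x : ℤ => (x:ℚ))) = (α:ℚ)/((α:ℚ) - p)) :
    ∃ c ∈ L, c ≠ 2 := by
  by_contra h
  push_neg at h
  have hap : ((α:ℚ) - p) ≠ 0 := by
    have : (p:ℚ) < α := by exact_mod_cast hpα
    have : (1:ℚ) < p := by exact_mod_cast hp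
    linarith
  have hrep : L.map (fun x : ℤ => (x:ℚ)) = List.replicate L.length (2:ℚ) := by
    rw [← List.length_map (fun x : ℤ => (x:ℚ))]
    apply List.eq_replicate_of_mem
    intro b hb
    rcases List.mem_map.mp hb with ⟨x, hx, hb'⟩
    rw [← hb', h x hx]
    norm_num
  rw [hrep, ncf_replicate] at hncf
  rcases Nat.eq_zero_or_pos L.length with h0 | hpos
  · have hz : (α:ℚ)/((α:ℚ) - p) = 0 := by
      rw [← hncf, h0]
      norm_num
    rcases div_eq_zero_iff.mp hz with h' | h'
    · have : α = 0 := by exact_mod_cast h'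
      omega
    · exact hap h'
  · set n := L.length with hn'
    have hn : ((n:ℚ)) ≠ 0 := by
      simp only [ne_eq, Nat.cast_eq_zero]
      omega
    rw [div_eq_div_iff hn hap] at hncf
    have hZ : ((n:ℤ) + 1) * (α - p) = α * (n:ℤ) := by exact_mod_cast hncf
    have hdvd : α = ((n:ℤ) + 1) * p := by linear_combination hZ
    have : IsUnit p := hcop.isUnit_of_dvd' dvd_rfl ⟨(n:ℤ) + 1, by linarith [hdvd]⟩
    rw [Int.isUnit_iff] at this
    omega

lemma map_coe_norm (L : List ℤ) :
    (L.map (fun x => (x : ℚ))) = L.map (fun x : ℤ => (x : ℚ)) := by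
  induction L with
  | nil => rfl
  | cons a l ih => simpa using ih

theorem torso_starts_with_twos (p α : ℤ) (hp : 1 < p) (hpα : p < α)
    (hcop : IsCoprime p α) (d : ℤ) (hd : d = ⌈(α : ℚ) / (p : ℚ)⌉) (hd3 : 3 ≤ d)
    (L : List ℤ) (hL : ∀ x ∈ L, (2 : ℤ) ≤ x)
    (hncf : ncf (L.map (fun x => (x : ℚ))) = (α : ℚ) / ((α : ℚ) - p)) :
    L.take (d - 2).toNat = List.replicate (d - 2).toNat (2 : ℤ) ∧
      ∃ c ∈ L, c ≠ 2 := by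
  rw [map_coe_norm] at hncf
  constructor
  · apply key (d - 2).toNat α p L hp hpα _ hL hncf
    have : (((d - 2).toNat : ℤ)) = d - 2 := Int.toNat_of_nonneg (by omega)
    omega
  · exact exists_ne_two α p L hp hpα hcop hncf
end

section
/- Let p_1, p_2, N, l, λ, κ be integers with p_1 ≥ 2, p_2 ≥ 2, N ≥ 2, l ≥ 0, satisfying p_1 = l + λ²(N + p_2 − 1) + (λ + 1)², p_2 = N + κ²(l + p_1 + 2), and 0 = λN − κ(l + λ + 2). Then λ = 0, κ = 0, p_2 = N, and l = p_1 − 1. -/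
theorem diophantine_system_one (p₁ p₂ N l lam kap : ℤ)
    (hp₁ : 2 ≤ p₁) (hp₂ : 2 ≤ p₂) (hN : 2 ≤ N) (hl : 0 ≤ l)
    (h1 : p₁ = l + lam ^ 2 * (N + p₂ - 1) + (lam + 1) ^ 2)
    (h2 : p₂ = N + kap ^ 2 * (l + p₁ + 2))
    (h3 : 0 = lam * N - kap * (l + lam + 2)) :
    lam = 0 ∧ kap = 0 ∧ p₂ = N ∧ l = p₁ - 1 := by
  have hk : kap = 0 := by
    by_contra hk
    have hk2 : 1 ≤ kap ^ 2 := by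
      rcases lt_or_gt_of_ne hk with h | h <;> nlinarith
    have hlam : lam ≠ 0 := by
      intro h
      subst h
      apply hk
      have : kap * (l + 2) = 0 := by linarith
      rcases mul_eq_zero.mp this with h | h
      · exact h
      · linarith
    have hlam2 : 1 ≤ lam ^ 2 := by
      rcases lt_or_gt_of_ne hlam with h | h <;> nlinarith
    nlinarith [sq_nonneg (lam + 1)]
  subst hk
  have hlam : lam = 0 := by
    have : lam * N = 0 := by linarith
    rcases mul_eq_zero.mp this with h | h
    · exact h
    · linarith
  subst hlam
  refine ⟨rfl, rfl, by linarith, by linarith⟩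
end

section
/- There are no integers p_1, p_2, N, l, λ, κ with p_1 ≥ 2, p_2 ≥ 2, N ≥ 2, l ≥ 0 satisfying simultaneously p_1 = l + λ²(N + p_2), p_2 = (N − 1) + (κ + 1)² + κ²(l + p_1), and 0 = κl + (κ + 1) + λN. -/
theorem diophantine_system_two (p₁ p₂ N l lam kap : ℤ)
    (hp₁ : 2 ≤ p₁) (hp₂ : 2 ≤ p₂) (hN : 2 ≤ N) (hl : 0 ≤ l)
    (h1 : p₁ = l + lam ^ 2 * (N + p₂))
    (h2 : p₂ = (N - 1) + (kap + 1) ^ 2 + kap ^ 2 * (l + p₁))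
    (h3 : 0 = kap * l + (kap + 1) + lam * N) :
    False := by
  by_cases hk : kap = 0
  · subst hk
    have hln : lam * N = -1 := by linarith
    rcases le_or_gt 0 lam with h | h
    · nlinarith [mul_nonneg h (by linarith : (0:ℤ) ≤ N)]
    · have hlam1 : lam ≤ -1 := by linarith
      nlinarith [mul_le_mul_of_nonneg_right hlam1 (by linarith : (0:ℤ) ≤ N)]
  · have hk2 : 1 ≤ kap ^ 2 := by
      rcases lt_or_gt_of_ne hk with h | h <;> nlinarith
    by_cases hlam : lam = 0
    · subst hlam
      have hkl : kap * (l + 1) = -1 := by ring_nf; ring_nf at h3; linarith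
      have hkneg : kap ≤ -1 := by nlinarith
      rcases (by omega : l = 0 ∨ 1 ≤ l) with h | h
      · subst h
        have : kap = -1 := by linarith [hkl]
        simp at h1
        omega
      · nlinarith [mul_le_mul_of_nonneg_right hkneg (by linarith : (0:ℤ) ≤ l + 1)]
    · have hl2 : 1 ≤ lam ^ 2 := by
        rcases lt_or_gt_of_ne hlam with h | h <;> nlinarith
      have hA : 0 ≤ (lam ^ 2 - 1) * (N + p₂) :=
        mul_nonneg (by linarith) (by linarith)
      have hB : 0 ≤ (kap ^ 2 - 1) * (l + p₁) :=
        mul_nonneg (by linarith) (by linarith)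
      nlinarith [sq_nonneg (kap + 1)]
end

section
/- There are no integers p_1, p_2, N, λ, μ with p_1 ≥ 2, p_2 ≥ 2, N ≥ 2 satisfying simultaneously p_1 + 1 = λ²(p_2 + N − 1) + (λ − 1)², p_2 = N + μ²(1 + p_1), and 0 = (λ − 1)μ − λN. -/
theorem diophantine_system_three (p₁ p₂ N lam mu : ℤ)
    (hp₁ : 2 ≤ p₁) (hp₂ : 2 ≤ p₂) (hN : 2 ≤ N)
    (h1 : p₁ + 1 = lam ^ 2 * (p₂ + N - 1) + (lam - 1) ^ 2)
    (h2 : p₂ = N + mu ^ 2 * (1 + p₁))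
    (h3 : 0 = (lam - 1) * mu - lam * N) :
    False := by
  rcases eq_or_ne lam 0 with h | hl
  · subst h; nlinarith
  rcases eq_or_ne mu 0 with h | hm
  · subst h
    have : lam * N = 0 := by linarith
    rcases mul_eq_zero.mp this with h | h
    · exact hl h
    · linarith
  have hl2 : 1 ≤ lam ^ 2 := by
    have h : 0 < lam ^ 2 := by positivity
    linarith [Int.lt_iff_add_one_le.mp h]
  have hm2 : 1 ≤ mu ^ 2 := by
    have h : 0 < mu ^ 2 := by positivity
    linarith [Int.lt_iff_add_one_le.mp h]
  nlinarith [sq_nonneg (lam - 1), mul_le_mul hl2 hm2 (by norm_num) (by positivity)]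
end
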